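/- arXiv:2303.03034 — 7 statements merged into one kernel-verified Lean document; each statement's English description precedes it below -/
import Mathlib

section
/- Let Λ = (L, 𝔐, ⊨) be a satisfaction system. If a model change operation ⊕ : 𝒫_fin(L) × 𝒫(𝔐) → 𝒫_fin(L) satisfies persistence (Mod(B) ⊆ Mod(⊕(B,M))) and finite temperance (for every M' with Mod(B) ∪ M ⊆ M' ⊊ Mod(⊕(B,M)), M' is not finitely representable), then it satisfies vacuity: if M ⊆ Mod(B) then Mod(⊕(B,M)) = Mod(B). -/
variable {α β : Type*}

def ModelsOf (sat : β → Set α → Prop) (B : Set α) : Set β := {m | sat m B}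

def FRsets (sat : β → Set α → Prop) : Set (Set β) :=
  {X | ∃ B : Set α, B.Finite ∧ ModelsOf sat B = X}

def FRsubs (sat : β → Set α → Prop) (M : Set β) : Set (Set β) :=
  {X | X ∈ FRsets sat ∧ X ⊆ M ∧ ¬ ∃ Y ∈ FRsets sat, X ⊂ Y ∧ Y ⊆ M}

def FRsups (sat : β → Set α → Prop) (M : Set β) : Set (Set β) :=
  {X | X ∈ FRsets sat ∧ M ⊆ X ∧ ¬ ∃ Y ∈ FRsets sat, M ⊆ Y ∧ Y ⊂ X}

theorem modelsOf_mem_FRsets {sat : β → Set α → Prop} {B : Set α} (hB : B.Finite) :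
    ModelsOf sat B ∈ FRsets sat :=
  ⟨B, hB, rfl⟩

theorem stmt1_general (sat : β → Set α → Prop) (f : Set α → Set β → Set α)
    (hpers : ∀ (B : Set α) (M : Set β), B.Finite →
      ModelsOf sat B ⊆ ModelsOf sat (f B M))
    (htemp : ∀ (B : Set α) (M : Set β), B.Finite → ∀ M' : Set β,
      ModelsOf sat B ∪ M ⊆ M' → M' ⊂ ModelsOf sat (f B M) → M' ∉ FRsets sat) :
    ∀ (B : Set α) (M : Set β), B.Finite → M ⊆ ModelsOf sat B →
      ModelsOf sat (f B M) = ModelsOf sat B := by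
  intro B M hB hM
  -- Mod B itself is a finitely representable set between Mod B ∪ M and Mod (f B M).
  obtain heq | hssub := (hpers B M hB).eq_or_ssubset
  · exact heq.symm
  · exact absurd (modelsOf_mem_FRsets hB)
      (htemp B M hB _ (Set.union_subset subset_rfl hM) hssub)

theorem stmt1 (sat : β → Set α → Prop) (f : Set α → Set β → Set α)
    (hfin : ∀ B M, (f B M).Finite)
    (hpers : ∀ (B : Set α) (M : Set β), B.Finite →
      ModelsOf sat B ⊆ ModelsOf sat (f B M))
    (htemp : ∀ (B : Set α) (M : Set β), B.Finite → ∀ M' : Set β,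
      ModelsOf sat B ∪ M ⊆ M' → M' ⊂ ModelsOf sat (f B M) → M' ∉ FRsets sat) :
    ∀ (B : Set α) (M : Set β), B.Finite → M ⊆ ModelsOf sat B →
      ModelsOf sat (f B M) = ModelsOf sat B :=
  stmt1_general sat f hpers htemp
end

section
/- Let Λ = (L, 𝔐, ⊨) be a satisfaction system with the reverse monotonic bijection property (RMBP): for all B₁, B₂ ⊆ L and every model m, m ∈ Mod(B₁) and m ∈ Mod(B₂) iff m ∈ Mod(B₁ ∪ B₂). Then for every set of models M ⊆ 𝔐, the set FRsups(M, Λ) of ⊆-minimal finitely representable supersets of M has at most one element. -/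
/-! Under RMBP the models of `B₁ ∪ B₂` are exactly the common models of `B₁` and `B₂`, so
finitely representable sets are closed under intersection. If `X` and `Y` are both minimal
finitely representable supersets of `M`, then so is `X ∩ Y ⊆ X, Y`, and minimality forces
`X = X ∩ Y = Y`. -/

variable {α β : Type*}

section

variable {sat : β → Set α → Prop}

theorem ModelsOf_union
    (hRMBP : ∀ (B₁ B₂ : Set α) (m : β),
      (m ∈ ModelsOf sat B₁ ∧ m ∈ ModelsOf sat B₂) ↔ m ∈ ModelsOf sat (B₁ ∪ B₂))
    (B₁ B₂ : Set α) : ModelsOf sat (B₁ ∪ B₂) = ModelsOf sat B₁ ∩ ModelsOf sat B₂ := by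
  ext m
  exact (hRMBP B₁ B₂ m).symm

theorem inter_mem_FRsets
    (hRMBP : ∀ (B₁ B₂ : Set α) (m : β),
      (m ∈ ModelsOf sat B₁ ∧ m ∈ ModelsOf sat B₂) ↔ m ∈ ModelsOf sat (B₁ ∪ B₂))
    {X Y : Set β} (hX : X ∈ FRsets sat) (hY : Y ∈ FRsets sat) : X ∩ Y ∈ FRsets sat := by
  obtain ⟨B₁, hB₁, rfl⟩ := hX
  obtain ⟨B₂, hB₂, rfl⟩ := hY
  exact ⟨B₁ ∪ B₂, hB₁.union hB₂, ModelsOf_union hRMBP B₁ B₂⟩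

theorem eq_of_mem_FRsups_of_subset {M X Y : Set β} (hX : X ∈ FRsups sat M)
    (hY : Y ∈ FRsets sat) (hMY : M ⊆ Y) (hYX : Y ⊆ X) : Y = X := by
  by_contra hne
  exact hX.2.2 ⟨Y, hY, hMY, hYX.ssubset_of_ne hne⟩

theorem FRsups_subsingleton_of_inter_mem
    (hinter : ∀ X ∈ FRsets sat, ∀ Y ∈ FRsets sat, X ∩ Y ∈ FRsets sat) (M : Set β) :
    (FRsups sat M).Subsingleton := by
  intro X hX Y hY
  have hXY : X ∩ Y ∈ FRsets sat := hinter X hX.1 Y hY.1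
  have hM : M ⊆ X ∩ Y := Set.subset_inter hX.2.1 hY.2.1
  calc X = X ∩ Y := (eq_of_mem_FRsups_of_subset hX hXY hM Set.inter_subset_left).symm
    _ = Y := eq_of_mem_FRsups_of_subset hY hXY hM Set.inter_subset_right

end

theorem stmt2 (sat : β → Set α → Prop)
    (hRMBP : ∀ (B₁ B₂ : Set α) (m : β),
      (m ∈ ModelsOf sat B₁ ∧ m ∈ ModelsOf sat B₂) ↔ m ∈ ModelsOf sat (B₁ ∪ B₂)) :
    ∀ M : Set β, (FRsups sat M).Subsingleton :=
  FRsups_subsingleton_of_inter_mem fun _ hX _ hY => inter_mem_FRsets hRMBP hX hY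
end

section
/- A satisfaction system Λ = (L, 𝔐, ⊨) is eviction-compatible (i.e., FRsubs(Mod(B) \ M, Λ) ≠ ∅ for every finite B ⊆ L and every M ⊆ 𝔐) if and only if for every M ⊆ 𝔐 either (i) M ∈ FRsets(Λ), or (ii) M has an immediate predecessor in the poset (FRsets(Λ) ∪ {M}, ⊊), or (iii) there is no M' ∈ FRsets(Λ) with M ⊆ M'. -/
/-! Maximal finitely representable subsets of `Mod(B) \ N` are exactly the maximal finitely
representable subsets of the sets `M` lying below some finitely representable set (take
`N = Mod(B) \ M`). For `M` itself finitely representable such a subset is `M`; otherwise the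
maximal ones are precisely the immediate predecessors of `M` in `FRsets ∪ {M}`. -/

variable {α β : Type*}

section FRsubs

variable {sat : β → Set α → Prop} {M X : Set β}

theorem self_mem_FRsubs (hM : M ∈ FRsets sat) : M ∈ FRsubs sat M :=
  ⟨hM, subset_rfl, fun ⟨_, _, hMY, hYM⟩ => hMY.not_subset hYM⟩

theorem mem_FRsubs_iff_of_notMem (hM : M ∉ FRsets sat) :
    X ∈ FRsubs sat M ↔
      X ∈ FRsets sat ∪ {M} ∧ X ⊂ M ∧ ¬ ∃ Z ∈ FRsets sat ∪ {M}, X ⊂ Z ∧ Z ⊂ M := by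
  constructor
  · rintro ⟨hX, hXM, hmax⟩
    have hXM' : X ⊂ M := hXM.ssubset_of_ne fun h => hM (h ▸ hX)
    refine ⟨Or.inl hX, hXM', ?_⟩
    rintro ⟨Z, hZ | rfl, hXZ, hZM⟩
    · exact hmax ⟨Z, hZ, hXZ, hZM.subset⟩
    · exact hZM.ne rfl
  · rintro ⟨hX | rfl, hXM, hmax⟩
    · refine ⟨hX, hXM.subset, ?_⟩
      rintro ⟨Y, hY, hXY, hYM⟩
      obtain rfl | hYM' := hYM.eq_or_ssubset
      · exact hM hY
      · exact hmax ⟨Y, Or.inl hY, hXY, hYM'⟩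
    · exact absurd hXM (lt_irrefl _)

theorem forall_FRsubs_modelsOf_diff_nonempty_iff :
    (∀ (B : Set α) (N : Set β), B.Finite → (FRsubs sat (ModelsOf sat B \ N)).Nonempty) ↔
      ∀ M : Set β, (∃ M' ∈ FRsets sat, M ⊆ M') → (FRsubs sat M).Nonempty := by
  constructor
  · rintro h M ⟨_, ⟨B, hB, rfl⟩, hMB⟩
    simpa only [Set.sdiff_sdiff_cancel_left hMB] using h B (ModelsOf sat B \ M) hB
  · exact fun h B N hB => h _ ⟨_, ⟨B, hB, rfl⟩, Set.sdiff_subset⟩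

end FRsubs

theorem stmt6 (sat : β → Set α → Prop) :
    (∀ (B : Set α) (M : Set β), B.Finite →
        (FRsubs sat (ModelsOf sat B \ M)).Nonempty) ↔
      ∀ M : Set β,
        M ∈ FRsets sat ∨
        (∃ X ∈ FRsets sat ∪ {M}, X ⊂ M ∧
          ¬ ∃ Z ∈ FRsets sat ∪ {M}, X ⊂ Z ∧ Z ⊂ M) ∨
        ¬ ∃ M' ∈ FRsets sat, M ⊆ M' := by
  rw [forall_FRsubs_modelsOf_diff_nonempty_iff]
  refine forall_congr' fun M => ?_
  by_cases hM : M ∈ FRsets sat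
  · exact iff_of_true (fun _ => ⟨M, self_mem_FRsubs hM⟩) (Or.inl hM)
  · simp only [Set.Nonempty, mem_FRsubs_iff_of_notMem hM]
    rw [or_iff_right hM]
    exact imp_iff_or_not
end

section
/- Let Λ = (L, 𝔐, ⊨) be a satisfaction system such that FRsets(Λ) is finite. Then Λ is reception-compatible (FRsups(Mod(B) ∪ M, Λ) ≠ ∅ for all finite B ⊆ L and M ⊆ 𝔐) if and only if 𝔐 ∈ FRsets(Λ). -/
variable {α β : Type*}

theorem stmt9 (sat : β → Set α → Prop) (hfin : (FRsets sat).Finite) :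
    (∀ (B : Set α) (M : Set β), B.Finite →
        (FRsups sat (ModelsOf sat B ∪ M)).Nonempty) ↔
      (Set.univ : Set β) ∈ FRsets sat := by
  constructor
  · intro h
    obtain ⟨X, hX, hsub, -⟩ := h ∅ Set.univ Set.finite_empty
    have : X = Set.univ := Set.eq_univ_of_univ_subset
      (fun x hx => hsub (Or.inr hx))
    rwa [← this]
  · intro huniv B M _
    set M' := ModelsOf sat B ∪ M
    set S : Set (Set β) := {Y | Y ∈ FRsets sat ∧ M' ⊆ Y}
    have hSfin : S.Finite := hfin.subset (fun Y hY => hY.1)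
    have hSne : S.Nonempty := ⟨Set.univ, huniv, Set.subset_univ _⟩
    obtain ⟨X, hXS, hmin⟩ : ∃ X ∈ S, ∀ Y ∈ S, id Y ≤ id X → id X = id Y := by
      obtain ⟨X, hXS, hm⟩ := Set.Finite.exists_minimalFor id S hSfin hSne
      exact ⟨X, hXS, fun Y hY h => le_antisymm (hm hY h) h⟩
    refine ⟨X, hXS.1, hXS.2, ?_⟩
    rintro ⟨Y, hY, hMY, hYX⟩
    have := hmin Y ⟨hY, hMY⟩ hYX.le
    exact hYX.ne' this
end

section
/- Let Λ = (L, 𝔐, ⊨) be a reception-compatible satisfaction system (FRsups(Mod(B) ∪ M, Λ) ≠ ∅ for all finite B and all M). If a model change operation ⊕ satisfies success (M ⊆ Mod(⊕(B,M))), persistence (Mod(B) ⊆ Mod(⊕(B,M))), and finite temperance (if Mod(B) ∪ M ⊆ M' ⊊ Mod(⊕(B,M)) then M' ∉ FRsets(Λ)), then Mod(⊕(B,M)) ∈ FRsups(Mod(B) ∪ M, Λ) for all finite B ⊆ L and M ⊆ 𝔐. -/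
variable {α β : Type*}

theorem stmt11_general (sat : β → Set α → Prop) (f : Set α → Set β → Set α)
    (hfin : ∀ B M, (f B M).Finite)
    (hsucc : ∀ (B : Set α) (M : Set β), B.Finite →
      M ⊆ ModelsOf sat (f B M))
    (hpers : ∀ (B : Set α) (M : Set β), B.Finite →
      ModelsOf sat B ⊆ ModelsOf sat (f B M))
    (htemp : ∀ (B : Set α) (M : Set β), B.Finite → ∀ M' : Set β,
      ModelsOf sat B ∪ M ⊆ M' → M' ⊂ ModelsOf sat (f B M) → M' ∉ FRsets sat) :
    ∀ (B : Set α) (M : Set β), B.Finite →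
      ModelsOf sat (f B M) ∈ FRsups sat (ModelsOf sat B ∪ M) := by
  intro B M hB
  refine ⟨⟨f B M, hfin B M, rfl⟩, Set.union_subset (hpers B M hB) (hsucc B M hB), ?_⟩
  rintro ⟨Y, hY, hBMY, hYf⟩
  exact htemp B M hB Y hBMY hYf hY

theorem stmt11 (sat : β → Set α → Prop) (f : Set α → Set β → Set α)
    (hcompat : ∀ (B : Set α) (M : Set β), B.Finite →
      (FRsups sat (ModelsOf sat B ∪ M)).Nonempty)
    (hfin : ∀ B M, (f B M).Finite)
    (hsucc : ∀ (B : Set α) (M : Set β), B.Finite →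
      M ⊆ ModelsOf sat (f B M))
    (hpers : ∀ (B : Set α) (M : Set β), B.Finite →
      ModelsOf sat B ⊆ ModelsOf sat (f B M))
    (htemp : ∀ (B : Set α) (M : Set β), B.Finite → ∀ M' : Set β,
      ModelsOf sat B ∪ M ⊆ M' → M' ⊂ ModelsOf sat (f B M) → M' ∉ FRsets sat) :
    ∀ (B : Set α) (M : Set β), B.Finite →
      ModelsOf sat (f B M) ∈ FRsups sat (ModelsOf sat B ∪ M) :=
  stmt11_general sat f hfin hsucc hpers htemp
end

section
/- Consider the satisfaction system Λ_q = (L_q, ℚ, ⊨_q) where L_q is the set of closed rational intervals [x,y] with x ≤ y, models are rational numbers, and for Q ⊆ ℚ, Q ⊨_q B iff every z ∈ Q satisfies x ≤ z ≤ y for all [x,y] ∈ B (so a single model q satisfies B iff q lies in every interval of B). Then Λ_q is not eviction-compatible: specifically, for the base B = {[0,1]} and M = {1}, the set FRsubs(Mod(B) \ M, Λ_q) of ⊆-maximal finitely representable subsets of {q ∈ ℚ | 0 ≤ q < 1} is empty. -/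
variable {α β : Type*}

/-- The language of closed rational intervals `[x, y]` with `x ≤ y`. -/
def QInt : Type := {p : ℚ × ℚ // p.1 ≤ p.2}

/-- A rational model `q` satisfies a base `B` iff it lies in every interval of `B`. -/
def satQ (q : ℚ) (B : Set QInt) : Prop := ∀ i ∈ B, i.1.1 ≤ q ∧ q ≤ i.1.2

theorem stmt12 :
    FRsubs satQ
      (ModelsOf satQ ({⟨(0, 1), by norm_num⟩} : Set QInt) \ {(1 : ℚ)}) = ∅ := by
  ext X
  simp only [Set.mem_empty_iff_false, iff_false]
  rintro ⟨⟨B, hBfin, hBX⟩, hXM, hmax⟩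
  apply hmax
  rcases X.eq_empty_or_nonempty with hX | ⟨q0, hq0⟩
  · -- X empty: extend to {0}
    refine ⟨ModelsOf satQ ({⟨(0, 0), le_refl 0⟩} : Set QInt), ⟨_, Set.finite_singleton _, rfl⟩,
      ?_, ?_⟩
    · rw [hX]
      refine ⟨Set.empty_subset _, fun h => ?_⟩
      have : (0 : ℚ) ∈ ModelsOf satQ ({⟨(0, 0), le_refl 0⟩} : Set QInt) := by
        rintro i hi
        replace hi := Set.mem_singleton_iff.mp hi
        subst hi; exact ⟨le_refl 0, le_refl 0⟩
      exact (h this).elim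
    · rintro q hq
      have h0 := hq _ rfl
      have hq0' : q = 0 := le_antisymm h0.2 h0.1
      subst hq0'
      constructor
      · rintro i hi
        replace hi := Set.mem_singleton_iff.mp hi
        subst hi; norm_num
      · simp
  · -- X nonempty
    have hBne : B.Nonempty := by
      by_contra h
      rw [Set.not_nonempty_iff_eq_empty] at h
      subst h
      have h1 : (1 : ℚ) ∈ X := by
        rw [← hBX]; intro i hi; exact absurd hi (Set.notMem_empty i)
      exact (hXM h1).2 rfl
    obtain ⟨i₀, hi₀B, hi₀⟩ := Set.exists_max_image B (fun i => i.1.1) hBfin hBne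
    obtain ⟨i₁, hi₁B, hi₁⟩ := Set.exists_max_image B (fun i => -i.1.2) hBfin hBne
    set a := i₀.1.1 with ha
    set b := i₁.1.2 with hb
    have hi₁' : ∀ i ∈ B, b ≤ i.1.2 := fun i hi => by
      have := hi₁ i hi; linarith
    have hq0' : satQ q0 B := by rw [← hBX] at hq0; exact hq0
    have hab : a ≤ b := le_trans (hq0' i₀ hi₀B).1 (hq0' i₁ hi₁B).2
    have haX : a ∈ X := by
      rw [← hBX]
      exact fun i hi => ⟨hi₀ i hi, le_trans hab (hi₁' i hi)⟩
    have hbX : b ∈ X := by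
      rw [← hBX]
      exact fun i hi => ⟨le_trans (hi₀ i hi) hab, hi₁' i hi⟩
    have ha0 : (0 : ℚ) ≤ a := ((hXM haX).1 _ rfl).1
    have hb1 : b < 1 := lt_of_le_of_ne ((hXM hbX).1 _ rfl).2 (hXM hbX).2
    set c : ℚ := (b + 1) / 2 with hc
    have hbc : b < c := by rw [hc]; linarith
    have hc1 : c < 1 := by rw [hc]; linarith
    have hac : a ≤ c := le_trans hab hbc.le
    refine ⟨ModelsOf satQ ({⟨(a, c), hac⟩} : Set QInt), ⟨_, Set.finite_singleton _, rfl⟩,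
      ⟨?_, ?_⟩, ?_⟩
    · -- X ⊆ Y
      intro q hq
      have hq' : satQ q B := by rw [← hBX] at hq; exact hq
      rintro i hi
      replace hi := Set.mem_singleton_iff.mp hi
      subst hi
      exact ⟨(hq' i₀ hi₀B).1, le_trans (hq' i₁ hi₁B).2 hbc.le⟩
    · -- not Y ⊆ X
      intro h
      have hcY : c ∈ ModelsOf satQ ({⟨(a, c), hac⟩} : Set QInt) := by
        rintro i hi
        replace hi := Set.mem_singleton_iff.mp hi
        subst hi
        exact ⟨hac, le_refl c⟩
      have hcX := h hcY
      rw [← hBX] at hcX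
      have := (hcX i₁ hi₁B).2
      linarith
    · -- Y ⊆ M
      intro q hq
      have h := hq _ rfl
      refine ⟨fun i hi => ?_, ?_⟩
      · replace hi := Set.mem_singleton_iff.mp hi
        subst hi
        exact ⟨le_trans ha0 h.1, by simpa using le_trans h.2 hc1.le⟩
      · simp only [Set.mem_singleton_iff]
        intro h1
        subst h1
        linarith [h.2]
end

section
/- In the NeXt fragment of LTL (formulas X^n p), the empty set of models is not finitely representable: every finite base B of formulas has a model, namely the one-state Kripke structure M = ({s}, {(s,s)}, λ) with λ(s) = P (all atoms true) pointed at s satisfies every formula X^k p and hence every base. Consequently, this satisfaction system is not eviction-compatible: for B = {p} and M = Mod(B), FRsubs(Mod(B) \ M) = FRsubs(∅) = ∅. -/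
variable {α β : Type*}

/-- A pointed Kripke structure over atoms \`P\`: states, a total transition
relation, a labeling, and an initial state. -/
structure Kripke (P : Type) : Type 1 where
  S : Type
  R : S → S → Prop
  total : ∀ s : S, ∃ t : S, R s t
  label : S → Set P
  init : S

/-- A path of \`K\` starting at the initial state. -/
def Kripke.IsPath {P : Type} (K : Kripke P) (π : ℕ → K.S) : Prop :=
  π 0 = K.init ∧ ∀ i, K.R (π i) (π (i + 1))

/-- \`(K, init)\` satisfies the formula \`Xⁿ p\` (encoded as the pair \`(n, p)\`) iff
\`p\` is labelled at the \`n\`-th state of every path from the initial state. -/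
def KSat {P : Type} (K : Kripke P) (φ : ℕ × P) : Prop :=
  ∀ π : ℕ → K.S, K.IsPath π → φ.2 ∈ K.label (π φ.1)

/-- A pointed Kripke model satisfies a base iff it satisfies each of its formulas. -/
def satK {P : Type} (K : Kripke P) (B : Set (ℕ × P)) : Prop :=
  ∀ φ ∈ B, KSat K φ

/-- The one-state Kripke structure looping on itself with all atoms true. -/
def Kall (P : Type) : Kripke P where
  S := PUnit
  R := fun _ _ => True
  total := fun s => ⟨s, trivial⟩
  label := fun _ => Set.univ
  init := PUnit.unit

section FiniteRepresentability

variable {sat : β → Set α → Prop}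

theorem empty_notMem_FRsets (h : ∀ B : Set α, B.Finite → (ModelsOf sat B).Nonempty) :
    (∅ : Set β) ∉ FRsets sat := by
  rintro ⟨B, hB, hEmpty⟩
  exact (hEmpty ▸ h B hB).ne_empty rfl

theorem FRsubs_empty_of_empty_notMem_FRsets (h : (∅ : Set β) ∉ FRsets sat) :
    FRsubs sat ∅ = ∅ :=
  Set.eq_empty_of_forall_notMem fun _ ⟨hX, hXsub, _⟩ =>
    h (Set.subset_empty_iff.mp hXsub ▸ hX)

end FiniteRepresentability

theorem kSat_kall (P : Type) (φ : ℕ × P) : KSat (Kall P) φ :=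
  fun _ _ => Set.mem_univ _

theorem kall_mem_modelsOf_satK (P : Type) (B : Set (ℕ × P)) :
    Kall P ∈ ModelsOf satK B :=
  fun φ _ => kSat_kall P φ

theorem stmt17_general (P : Type) :
    (∀ φ : ℕ × P, KSat (Kall P) φ) ∧
    (∀ B : Set (ℕ × P), B.Finite → (ModelsOf satK B).Nonempty) ∧
    ((∅ : Set (Kripke P)) ∉ FRsets (satK (P := P))) ∧
    (∀ p : P,
      FRsubs satK
        (ModelsOf satK ({((0 : ℕ), p)} : Set (ℕ × P)) \
          ModelsOf satK ({((0 : ℕ), p)} : Set (ℕ × P))) = ∅) := by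
  have hModel : ∀ B : Set (ℕ × P), B.Finite → (ModelsOf satK B).Nonempty :=
    fun B _ => ⟨Kall P, kall_mem_modelsOf_satK P B⟩
  have hEmpty := empty_notMem_FRsets hModel
  refine ⟨kSat_kall P, hModel, hEmpty, fun p => ?_⟩
  rw [sdiff_self]
  exact FRsubs_empty_of_empty_notMem_FRsets hEmpty

theorem stmt17 (P : Type) [Nonempty P] :
    (∀ φ : ℕ × P, KSat (Kall P) φ) ∧
    (∀ B : Set (ℕ × P), B.Finite → (ModelsOf satK B).Nonempty) ∧
    ((∅ : Set (Kripke P)) ∉ FRsets (satK (P := P))) ∧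
    (∀ p : P,
      FRsubs satK
        (ModelsOf satK ({((0 : ℕ), p)} : Set (ℕ × P)) \
          ModelsOf satK ({((0 : ℕ), p)} : Set (ℕ × P))) = ∅) :=
  stmt17_general P
end
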